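/- Consider functions κ : {1,2,3,4} → {0,1,2,3,4} with the equivalence κ ~ κ' iff κ' = σ̃ ∘ κ ∘ τ̂ for some permutations σ, τ of {1,2,3}. The set of functions that never take the value 0 is a union of equivalence classes; it contains exactly 4⁴ = 256 functions and splits into exactly 20 equivalence classes. -/

import Mathlib

/-- The identification of `{1,2,3}` (modelled by `Fin 3`) with the subset `{1,2,3}`
of `{0,1,2,3,4}` (modelled by `Fin 5`), sending `i` to `i + 1`. -/
def embFive : Fin 3 ≃ {j : Fin 5 // 1 ≤ j.val ∧ j.val ≤ 3} where
  toFun i := ⟨⟨i.val + 1, by have := i.isLt; omega⟩,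
    (by have := i.isLt; omega : 1 ≤ i.val + 1 ∧ i.val + 1 ≤ 3)⟩
  invFun j := ⟨j.val.val - 1, by have := j.property; omega⟩
  left_inv i := by apply Fin.ext; simp
  right_inv j := by
    apply Subtype.ext; apply Fin.ext
    have := j.property; simp; omega

/-- The identification of `{1,2,3}` (modelled by `Fin 3`) with the subset of indices
`{1,2,3}` of the index set `{1,2,3,4}` (modelled by `Fin 4`, where the index `4` is the
last element of `Fin 4`). -/
def embFour : Fin 3 ≃ {j : Fin 4 // j.val ≤ 2} where
  toFun i := ⟨⟨i.val, by have := i.isLt; omega⟩, (by have := i.isLt; omega : i.val ≤ 2)⟩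
  invFun j := ⟨j.val.val, by have := j.property; omega⟩
  left_inv i := Fin.ext rfl
  right_inv j := Subtype.ext (Fin.ext rfl)

/-- `σ̃`: the permutation of `{0,1,2,3,4}` fixing `0` and `4` and agreeing with `σ` on
`{1,2,3}`. -/
def tilde (σ : Equiv.Perm (Fin 3)) : Equiv.Perm (Fin 5) :=
  σ.extendDomain embFive

/-- `τ̂`: the permutation of the index set `{1,2,3,4}` fixing `4` and agreeing with `τ` on
`{1,2,3}`. -/
def hat (τ : Equiv.Perm (Fin 3)) : Equiv.Perm (Fin 4) :=
  τ.extendDomain embFour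

/-- Two punctured quartets `κ, κ' : {1,2,3,4} → {0,1,2,3,4}` are equivalent iff
`κ' = σ̃ ∘ κ ∘ τ̂` for some permutations `σ, τ` of `{1,2,3}`. -/
def pRel (κ κ' : Fin 4 → Fin 5) : Prop :=
  ∃ σ τ : Equiv.Perm (Fin 3), κ' = ⇑(tilde σ) ∘ κ ∘ ⇑(hat τ)

/-!
The relation `pRel` is the orbit relation of `S₃ × S₃` acting by `(σ, τ) • κ = σ̃ ∘ κ ∘ τ̂⁻¹`,
and this action preserves the zero-free quartets because every `σ̃` fixes `0`. By Burnside's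
lemma the number of orbits on the `4⁴` zero-free quartets is the average number of fixed points
of the `36` group elements, and a kernel computation gives `720 / 36 = 20`.
-/

open Equiv MulAction

abbrev ZeroFreeQuartet := {κ : Fin 4 → Fin 5 // ∀ i, κ i ≠ 0}

lemma tilde_one : tilde 1 = 1 := Perm.extendDomain_one _

lemma hat_one : hat 1 = 1 := Perm.extendDomain_one _

lemma tilde_mul (σ σ' : Perm (Fin 3)) : tilde (σ * σ') = tilde σ * tilde σ' :=
  (Perm.extendDomain_mul _ _ _).symm

lemma hat_mul (τ τ' : Perm (Fin 3)) : hat (τ * τ') = hat τ * hat τ' :=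
  (Perm.extendDomain_mul _ _ _).symm

lemma tilde_apply_zero (σ : Perm (Fin 3)) : tilde σ 0 = 0 :=
  Perm.extendDomain_apply_not_subtype _ _ (by decide)

lemma tilde_apply_eq_zero_iff (σ : Perm (Fin 3)) {j : Fin 5} : tilde σ j = 0 ↔ j = 0 :=
  (tilde σ).injective.eq_iff' (tilde_apply_zero σ)

lemma pRel.forall_ne_zero_iff {κ κ' : Fin 4 → Fin 5} (h : pRel κ κ') :
    (∀ i, κ i ≠ 0) ↔ (∀ i, κ' i ≠ 0) := by
  obtain ⟨σ, τ, rfl⟩ := h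
  simp only [Function.comp_apply, ne_eq, tilde_apply_eq_zero_iff]
  exact (hat τ).forall_congr_right.symm

lemma card_zeroFreeQuartet : Nat.card ZeroFreeQuartet = 256 := by
  rw [Nat.card_congr (Equiv.subtypePiEquivPi (p := fun _ (b : Fin 5) => b ≠ 0)), Nat.card_pi]
  simp [Nat.card_eq_fintype_card]

instance : MulAction (Perm (Fin 3) × Perm (Fin 3)) ZeroFreeQuartet where
  smul g κ := ⟨tilde g.1 ∘ κ.1 ∘ hat g.2⁻¹, fun _ => (tilde_apply_eq_zero_iff _).not.2 (κ.2 _)⟩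
  one_smul κ := Subtype.ext <| funext fun i =>
    show tilde 1 (κ.1 (hat 1⁻¹ i)) = κ.1 i by simp [tilde_one, hat_one]
  mul_smul g h κ := Subtype.ext <| funext fun i =>
    show tilde (g.1 * h.1) (κ.1 (hat (g.2 * h.2)⁻¹ i)) =
      tilde g.1 (tilde h.1 (κ.1 (hat h.2⁻¹ (hat g.2⁻¹ i)))) by
    simp [tilde_mul, hat_mul]

lemma ZeroFreeQuartet.coe_smul (g : Perm (Fin 3) × Perm (Fin 3)) (κ : ZeroFreeQuartet) :
    ((g • κ : ZeroFreeQuartet) : Fin 4 → Fin 5) = tilde g.1 ∘ κ ∘ hat g.2⁻¹ := rfl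

lemma pRel_iff_mem_orbit (κ κ' : ZeroFreeQuartet) :
    pRel κ κ' ↔ κ' ∈ orbit (Perm (Fin 3) × Perm (Fin 3)) κ := by
  simp only [pRel, mem_orbit_iff, Prod.exists, Subtype.ext_iff, ZeroFreeQuartet.coe_smul,
    eq_comm (a := κ'.1)]
  exact exists_congr fun σ => (Equiv.inv _).exists_congr_right.symm.trans (by simp)

lemma pRel_eq_orbitRel : (fun κ κ' : ZeroFreeQuartet => pRel κ κ') =
    ⇑(orbitRel (Perm (Fin 3) × Perm (Fin 3)) ZeroFreeQuartet) := by
  funext κ κ'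
  rw [pRel_iff_mem_orbit, mem_orbit_symm, ← orbitRel_apply]

lemma sum_card_fixedBy_zeroFreeQuartet :
    ∑ g : Perm (Fin 3) × Perm (Fin 3), Fintype.card (fixedBy ZeroFreeQuartet g) = 720 := by
  decide +kernel

lemma card_orbitRel_quotient_zeroFreeQuartet :
    Nat.card (orbitRel.Quotient (Perm (Fin 3) × Perm (Fin 3)) ZeroFreeQuartet) = 20 := by
  have := Fintype.ofFinite (orbitRel.Quotient (Perm (Fin 3) × Perm (Fin 3)) ZeroFreeQuartet)
  have burnside :=
    sum_card_fixedBy_eq_card_orbits_mul_card_group (Perm (Fin 3) × Perm (Fin 3)) ZeroFreeQuartet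
  rw [sum_card_fixedBy_zeroFreeQuartet, Fintype.card_prod, Fintype.card_perm,
    Fintype.card_fin] at burnside
  simp only [Nat.factorial] at burnside
  rw [Nat.card_eq_fintype_card]
  exact Nat.eq_of_mul_eq_mul_right (by norm_num) burnside.symm

/-- The set of punctured quartets `κ : {1,2,3,4} → {0,1,2,3,4}` that never take the
value `0` is a union of equivalence classes of `pRel`; it contains exactly `4⁴ = 256`
functions and splits into exactly `20` equivalence classes (`S₃ × S₃`-orbits). -/
theorem twenty_orbits_without_zero :
    (∀ κ κ' : Fin 4 → Fin 5, pRel κ κ' → ((∀ i, κ i ≠ 0) ↔ (∀ i, κ' i ≠ 0))) ∧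
    Nat.card {κ : Fin 4 → Fin 5 // ∀ i, κ i ≠ 0} = 256 ∧
    Nat.card (Quot (fun κ κ' : {κ : Fin 4 → Fin 5 // ∀ i, κ i ≠ 0} => pRel κ.val κ'.val))
      = 20 := by
  refine ⟨fun _ _ => pRel.forall_ne_zero_iff, card_zeroFreeQuartet, ?_⟩
  rw [pRel_eq_orbitRel]
  exact card_orbitRel_quotient_zeroFreeQuartet
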